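/- Fix a natural number j ≥ 0 and real numbers A, B. On ℝ² (i.e., EuclideanSpace ℝ 2), define u(x) = (1/(2π))·‖x‖^{2j}·(A·ln‖x‖ − B) and U(x) = (1/(2π))·‖x‖^{2(j+1)}·(A′·ln‖x‖ − B′), where A′ = A/(4(j+1)²) and B′ = (A/(j+1) + B)/(4(j+1)²). Then at every point x ≠ 0, U is twice differentiable and ΔU(x) = u(x); that is, the higher-order fundamental solutions of the two-dimensional Laplace operator given by these recursion formulas satisfy Δu*_{j+1} = u*_j away from the origin. -/

import Mathlib

/-!
Both `u` and `U` are radial, `U x = φ (‖x‖ ^ 2)` with `φ t = c t^(j+1) (a log t - b)`. For a radial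
function `x ↦ φ (‖x‖ ^ 2)` on an `n`-dimensional space the gradient is `2 φ'(‖x‖²) x`, so the
Laplacian is `2n φ'(s) + 4 s φ''(s)` at `s = ‖x‖²`. For our `φ`, both `φ'` and `s φ''` are `s^j`
times an affine function of `log s`, and the recursion for `A'`, `B'` is exactly what makes
`4 φ' + 4 s φ''` equal to the profile of `u`.
-/

open Real Filter Topology Module

theorem hasDerivAt_pow_mul_log_add (k : ℕ) (p q : ℝ) {t : ℝ} (ht : t ≠ 0) :
    HasDerivAt (fun t => t ^ k * (p * log t + q))
      (t ^ k * (k * p * log t + (p + k * q)) / t) t := by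
  refine ((hasDerivAt_pow k t).mul (((hasDerivAt_log ht).const_mul p).add_const q)).congr_deriv ?_
  rcases k with _ | k
  · field_simp; simp
  · push_cast; rw [pow_succ]; field_simp; ring

theorem hasDerivAt_pow_succ_mul_log_add (k : ℕ) (p q : ℝ) {t : ℝ} (ht : t ≠ 0) :
    HasDerivAt (fun t => t ^ (k + 1) * (p * log t + q))
      (t ^ k * ((k + 1) * p * log t + (p + (k + 1) * q))) t := by
  refine (hasDerivAt_pow_mul_log_add (k + 1) p q ht).congr_deriv ?_
  push_cast
  rw [pow_succ]
  field_simp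

section RadialFunctions

variable {E : Type*} [NormedAddCommGroup E] [InnerProductSpace ℝ E]

theorem trace_smul_id_add_smul_smulRight_innerSL [FiniteDimensional ℝ E] (a b : ℝ) (x : E) :
    LinearMap.trace ℝ E (a • ContinuousLinearMap.id ℝ E + b • (innerSL ℝ x).smulRight x :
      E →L[ℝ] E) = a * finrank ℝ E + b * ‖x‖ ^ 2 := by
  simp [LinearMap.trace_id]

theorem HasDerivAt.hasGradientAt_comp_norm_sq [CompleteSpace E] {φ : ℝ → ℝ} {d : ℝ} {x : E}
    (h : HasDerivAt φ d (‖x‖ ^ 2)) :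
    HasGradientAt (fun y => φ (‖y‖ ^ 2)) ((2 * d) • x) x := by
  rw [hasGradientAt_iff_hasFDerivAt]
  refine (h.comp_hasFDerivAt x (hasStrictFDerivAt_norm_sq x).hasFDerivAt).congr_fderiv ?_
  ext v
  simp
  ring

theorem hasFDerivAt_gradient_comp_norm_sq [CompleteSpace E] {φ φ' : ℝ → ℝ} {d : ℝ} {x : E}
    (hφ : ∀ᶠ t in 𝓝 (‖x‖ ^ 2), HasDerivAt φ (φ' t) t)
    (hφ' : HasDerivAt φ' d (‖x‖ ^ 2)) :
    HasFDerivAt (gradient fun y => φ (‖y‖ ^ 2))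
      ((2 * φ' (‖x‖ ^ 2)) • ContinuousLinearMap.id ℝ E
        + (4 * d) • (innerSL ℝ x).smulRight x) x := by
  have hgrad : gradient (fun y => φ (‖y‖ ^ 2)) =ᶠ[𝓝 x] fun y => (2 * φ' (‖y‖ ^ 2)) • y :=
    ((continuous_norm.pow 2).continuousAt.eventually hφ).mono fun y hy =>
      hy.hasGradientAt_comp_norm_sq.gradient
  have hcoeff := ((hφ'.comp_hasFDerivAt x (hasStrictFDerivAt_norm_sq x).hasFDerivAt).const_mul 2)
  refine ((hcoeff.smul (hasFDerivAt_id x)).congr_fderiv ?_).congr_of_eventuallyEq hgrad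
  ext v
  simp [smul_smul]
  ring_nf

theorem trace_fderiv_gradient_comp_norm_sq [FiniteDimensional ℝ E] {φ φ' : ℝ → ℝ} {d : ℝ} {x : E}
    (hφ : ∀ᶠ t in 𝓝 (‖x‖ ^ 2), HasDerivAt φ (φ' t) t)
    (hφ' : HasDerivAt φ' d (‖x‖ ^ 2)) :
    LinearMap.trace ℝ E (fderiv ℝ (gradient fun y => φ (‖y‖ ^ 2)) x).toLinearMap
      = 2 * finrank ℝ E * φ' (‖x‖ ^ 2) + 4 * ‖x‖ ^ 2 * d := by
  rw [(hasFDerivAt_gradient_comp_norm_sq hφ hφ').fderiv, trace_smul_id_add_smul_smulRight_innerSL]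
  ring

end RadialFunctions

/-- One step of the recursion for the higher-order fundamental solutions of the 2D Laplace
operator: with `u(x) = (1/(2π))·‖x‖^(2j)·(A·ln‖x‖ − B)` and
`U(x) = (1/(2π))·‖x‖^(2(j+1))·(A′·ln‖x‖ − B′)`, where `A′ = A/(4(j+1)²)` and
`B′ = (A/(j+1) + B)/(4(j+1)²)`, the function `U` is twice differentiable away from the origin
and `ΔU = u` there (the Laplacian being the trace of the second derivative). -/
theorem stmt7 (j : ℕ) (A B : ℝ) (u U : EuclideanSpace ℝ (Fin 2) → ℝ)
    (hu : ∀ x : EuclideanSpace ℝ (Fin 2),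
      u x = (1 / (2 * Real.pi)) * ‖x‖ ^ (2 * j) * (A * Real.log ‖x‖ - B))
    (hU : ∀ x : EuclideanSpace ℝ (Fin 2),
      U x = (1 / (2 * Real.pi)) * ‖x‖ ^ (2 * (j + 1)) *
        ((A / (4 * ((j : ℝ) + 1) ^ 2)) * Real.log ‖x‖
          - (A / ((j : ℝ) + 1) + B) / (4 * ((j : ℝ) + 1) ^ 2))) :
    ∀ x : EuclideanSpace ℝ (Fin 2), x ≠ 0 →
      DifferentiableAt ℝ U x ∧ DifferentiableAt ℝ (gradient U) x ∧
      LinearMap.trace ℝ (EuclideanSpace ℝ (Fin 2))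
        (fderiv ℝ (gradient U) x).toLinearMap = u x := by
  intro x hx
  set c : ℝ := 1 / (2 * π)
  -- `a = A' / 2` because `log ‖x‖ = log (‖x‖ ^ 2) / 2`
  set a : ℝ := A / (8 * ((j : ℝ) + 1) ^ 2) with ha
  set b : ℝ := (A / ((j : ℝ) + 1) + B) / (4 * ((j : ℝ) + 1) ^ 2) with hb
  clear_value c a b
  set φ : ℝ → ℝ := fun t => c * (t ^ (j + 1) * (a * log t + -b))
  set φ' : ℝ → ℝ := fun t => c * (t ^ j * ((j + 1) * a * log t + (a + (j + 1) * -b)))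
  have hUφ : U = fun y => φ (‖y‖ ^ 2) := by
    funext y
    simp only [hU, φ, ha, log_pow, ← pow_mul]
    push_cast
    field_simp
    ring
  have hs : ‖x‖ ^ 2 ≠ 0 := by positivity
  have hφ : ∀ᶠ t in 𝓝 (‖x‖ ^ 2), HasDerivAt φ (φ' t) t := by
    filter_upwards [eventually_ne_nhds hs] with t ht
    exact (hasDerivAt_pow_succ_mul_log_add j a (-b) ht).const_mul c
  have hφ' := (hasDerivAt_pow_mul_log_add j ((j + 1) * a) (a + (j + 1) * -b) hs).const_mul c
  rw [hUφ, hu]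
  refine ⟨hφ.self_of_nhds.hasGradientAt_comp_norm_sq.differentiableAt,
    (hasFDerivAt_gradient_comp_norm_sq hφ hφ').differentiableAt, ?_⟩
  rw [trace_fderiv_gradient_comp_norm_sq hφ hφ', finrank_euclideanSpace_fin]
  simp only [φ', ha, hb, log_pow, ← pow_mul]
  field_simp
  ring
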